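/- The polynomial w(z) = z[f^+(z),f^-(z)] does not vanish on the unit circle except possibly at z = ±1. Moreover, w and s^-(z) = z[f^-(z^{-1}), f^+(z)] cannot vanish simultaneously at any point of ℂ∖{0, 1, −1}. -/

import Mathlib

/-!
Wronskians of solutions of the same Jacobi equation are constant in `n`. Evaluating
`[f⁺(z), f⁺(z⁻¹)]` and `[f⁻(z), f⁻(z⁻¹)]` where the coefficients are free and combining with
the Plücker relation for 2 × 2 minors gives `w(z) w(z⁻¹) + (z - z⁻¹)² = s⁻(z) s⁻(z⁻¹)`, so a
common zero of `w` and `s⁻` forces `z = z⁻¹`, i.e. `z = ±1`. On the unit circle uniqueness for the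
recurrence gives `f^±(z⁻¹) = conj f^±(z)`, hence `s⁻(z⁻¹) = conj s⁻(z)`, and `w(z) = 0` would make
`(z - z̄)² = |s⁻(z)|² ≥ 0`, forcing `z` to be real.
-/

/-- The modified Wronskian `[f,g]ₙ = aₙ (f(n) g(n+1) − f(n+1) g(n))`. -/
def modWron (a : ℤ → ℝ) (f g : ℤ → ℂ) (n : ℤ) : ℂ :=
  (a n : ℂ) * (f n * g (n + 1) - f (n + 1) * g n)

open ComplexConjugate

def IsJacobiSolution (a b : ℤ → ℝ) (E : ℂ) (f : ℤ → ℂ) : Prop := ∀ n : ℤ,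
  (a (n - 1) : ℂ) * f (n - 1) + (a n : ℂ) * f (n + 1) + (b n : ℂ) * f n = E * f n

namespace IsJacobiSolution

variable {a b : ℤ → ℝ} {E : ℂ} {f g : ℤ → ℂ}

lemma sub (hf : IsJacobiSolution a b E f) (hg : IsJacobiSolution a b E g) :
    IsJacobiSolution a b E (f - g) := fun n => by
  simp only [Pi.sub_apply]
  linear_combination hf n - hg n

lemma conj_comp (hf : IsJacobiSolution a b E f) :
    IsJacobiSolution a b (conj E) (conj ∘ f) := fun n => by
  simpa using congrArg conj (hf n)

lemma eq_zero_of_apply_eq_zero (ha : ∀ n, a n ≠ 0) (hf : IsJacobiSolution a b E f) {N : ℤ}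
    (h₀ : f N = 0) (h₁ : f (N + 1) = 0) : f = 0 := by
  have ha' (n : ℤ) : (a n : ℂ) ≠ 0 := Complex.ofReal_ne_zero.mpr (ha n)
  suffices h : ∀ k, f k = 0 ∧ f (k + 1) = 0 from funext fun k => (h k).1
  intro k
  induction k using Int.inductionOn' (b := N) with
  | zero => exact ⟨h₀, h₁⟩
  | succ k _ ih =>
    have h := hf (k + 1)
    rw [add_sub_cancel_right, ih.1, ih.2] at h
    exact ⟨ih.2, by simpa [ha' (k + 1)] using h⟩
  | pred k _ ih =>
    have h := hf k
    rw [ih.1, ih.2] at h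
    exact ⟨by simpa [ha' (k - 1)] using h, by rw [sub_add_cancel]; exact ih.1⟩

lemma eq_of_apply_eq (ha : ∀ n, a n ≠ 0) (hf : IsJacobiSolution a b E f)
    (hg : IsJacobiSolution a b E g) {N : ℤ} (h₀ : f N = g N) (h₁ : f (N + 1) = g (N + 1)) :
    f = g :=
  sub_eq_zero.mp <| (hf.sub hg).eq_zero_of_apply_eq_zero ha (sub_eq_zero.mpr h₀)
    (sub_eq_zero.mpr h₁)

lemma modWron_add_one (hf : IsJacobiSolution a b E f) (hg : IsJacobiSolution a b E g) (n : ℤ) :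
    modWron a f g (n + 1) = modWron a f g n := by
  have hfn := hf (n + 1)
  have hgn := hg (n + 1)
  rw [add_sub_cancel_right] at hfn hgn
  simp only [modWron]
  linear_combination f (n + 1) * hgn - g (n + 1) * hfn

lemma modWron_eq (hf : IsJacobiSolution a b E f) (hg : IsJacobiSolution a b E g) (n m : ℤ) :
    modWron a f g n = modWron a f g m := by
  have h : Function.Periodic (modWron a f g) 1 := hf.modWron_add_one hg
  simpa using (h.int_mul_eq n).trans (h.int_mul_eq m).symm

lemma modWron_eq_inv_sub (hf : IsJacobiSolution a b E f) (hg : IsJacobiSolution a b E g)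
    {N : ℤ} (haN : a N = 1) {w : ℂ} (hw : w ≠ 0) (hfN : Set.EqOn f (w ^ ·) (Set.Icc N (N + 1)))
    (hgN : Set.EqOn g (w⁻¹ ^ ·) (Set.Icc N (N + 1))) (n : ℤ) :
    modWron a f g n = w⁻¹ - w := by
  rw [hf.modWron_eq hg n N, modWron, haN, hfN (by simp), hfN (by simp), hgN (by simp),
    hgN (by simp)]
  simp only [Complex.ofReal_one, one_mul, inv_zpow, zpow_add_one₀ hw]
  have := zpow_ne_zero N hw
  field_simp

end IsJacobiSolution

lemma modWron_plucker (a : ℤ → ℝ) (f₁ f₂ g₁ g₂ : ℤ → ℂ) (n : ℤ) :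
    modWron a f₁ g₁ n * modWron a f₂ g₂ n - modWron a g₂ f₁ n * modWron a g₁ f₂ n =
      modWron a f₁ f₂ n * modWron a g₁ g₂ n := by
  simp only [modWron]
  ring

lemma sub_inv_ne_zero {K : Type*} [Field K] {z : K} (hz : z ≠ 0) (h₁ : z ≠ 1) (h₂ : z ≠ -1) :
    z - z⁻¹ ≠ 0 := by
  intro h
  have hsq : z * z = 1 := by
    field_simp at h
    linear_combination h
  exact (mul_self_eq_one_iff.mp hsq).elim h₁ h₂

/-- On the unit circle `z - z⁻¹ = z - z̄` is purely imaginary, so its square is `≤ 0`. -/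
lemma sub_inv_eq_zero_of_sq_eq_mul_conj {z : ℂ} (hz : ‖z‖ = 1) {s : ℂ}
    (h : (z - z⁻¹) ^ 2 = s * conj s) : z - z⁻¹ = 0 := by
  rw [Complex.inv_eq_conj hz] at h ⊢
  have hd : (z - conj z) ^ 2 = -((z - conj z) * conj (z - conj z)) := by
    simp only [map_sub, Complex.conj_conj]
    ring
  rw [hd, Complex.mul_conj, Complex.mul_conj, neg_eq_iff_add_eq_zero] at h
  have h' : Complex.normSq (z - conj z) + Complex.normSq s = 0 := by exact_mod_cast h
  exact Complex.normSq_eq_zero.mp <|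
    le_antisymm (by linarith [Complex.normSq_nonneg s]) (Complex.normSq_nonneg _)

section Jost

variable {a b : ℤ → ℝ} {f : ℂ → ℤ → ℂ}

lemma isJacobiSolution_inv (hf : ∀ z : ℂ, z ≠ 0 → IsJacobiSolution a b (z + z⁻¹) (f z))
    {z : ℂ} (hz : z ≠ 0) : IsJacobiSolution a b (z + z⁻¹) (f z⁻¹) := by
  simpa [add_comm] using hf z⁻¹ (inv_ne_zero hz)

lemma jost_apply_conj (ha : ∀ n, a n ≠ 0)
    (hf : ∀ z : ℂ, z ≠ 0 → IsJacobiSolution a b (z + z⁻¹) (f z)) {N : ℤ} {e : ℤ → ℤ}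
    (hfN : ∀ z : ℂ, z ≠ 0 → Set.EqOn (f z) (fun k => z ^ e k) (Set.Icc N (N + 1)))
    {z : ℂ} (hz : z ≠ 0) : f (conj z) = conj ∘ f z := by
  have hz' : conj z ≠ 0 := by simpa using hz
  have hsol : IsJacobiSolution a b (conj z + (conj z)⁻¹) (conj ∘ f z) := by
    simpa using (hf z hz).conj_comp
  refine (hf _ hz').eq_of_apply_eq ha hsol (N := N) ?_ ?_ <;>
    simp [hfN _ hz' (by simp : N ∈ _), hfN _ hz (by simp : N ∈ _),
      hfN _ hz' (by simp : N + 1 ∈ _), hfN _ hz (by simp : N + 1 ∈ _)]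

theorem jost_modWron_identity {Nm Np : ℤ} {fp fm : ℂ → ℤ → ℂ} (haNp : a Np = 1)
    (haNm : a (Nm - 1) = 1)
    (hfp : ∀ z : ℂ, z ≠ 0 → IsJacobiSolution a b (z + z⁻¹) (fp z))
    (hfpbc : ∀ z : ℂ, z ≠ 0 → ∀ n : ℤ, Np ≤ n → fp z n = z ^ n)
    (hfm : ∀ z : ℂ, z ≠ 0 → IsJacobiSolution a b (z + z⁻¹) (fm z))
    (hfmbc : ∀ z : ℂ, z ≠ 0 → ∀ n : ℤ, n ≤ Nm → fm z n = z ^ (-n)) {z : ℂ} (hz : z ≠ 0)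
    (n : ℤ) :
    modWron a (fp z) (fm z) n * modWron a (fp z⁻¹) (fm z⁻¹) n + (z - z⁻¹) ^ 2 =
      modWron a (fm z⁻¹) (fp z) n * modWron a (fm z) (fp z⁻¹) n := by
  have hz' : z⁻¹ ≠ 0 := inv_ne_zero hz
  have hp := (hfp z hz).modWron_eq_inv_sub (isJacobiSolution_inv hfp hz) haNp hz
    (fun k hk => hfpbc z hz k hk.1) (fun k hk => hfpbc z⁻¹ hz' k hk.1) n
  have hm := (hfm z hz).modWron_eq_inv_sub (isJacobiSolution_inv hfm hz) haNm hz'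
    (fun k hk => by simp [hfmbc z hz k (by linarith [hk.2])])
    (fun k hk => by simp [hfmbc z⁻¹ hz' k (by linarith [hk.2])]) n
  have := modWron_plucker a (fp z) (fp z⁻¹) (fm z) (fm z⁻¹) n
  rw [hp, hm, inv_inv] at this
  linear_combination this

end Jost

theorem w_nonvanishing_and_no_common_zero_general (a b : ℤ → ℝ) (Nm Np : ℤ)
    (ha : ∀ n, 0 < a n)
    (hasupp : ∀ n, n < Nm ∨ Np ≤ n → a n = 1)
    (fp fm : ℂ → ℤ → ℂ)
    (hfp : ∀ z : ℂ, z ≠ 0 → ∀ n : ℤ,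
      (a (n - 1) : ℂ) * fp z (n - 1) + (a n : ℂ) * fp z (n + 1) + (b n : ℂ) * fp z n
        = (z + z⁻¹) * fp z n)
    (hfpbc : ∀ z : ℂ, z ≠ 0 → ∀ n : ℤ, Np ≤ n → fp z n = z ^ n)
    (hfm : ∀ z : ℂ, z ≠ 0 → ∀ n : ℤ,
      (a (n - 1) : ℂ) * fm z (n - 1) + (a n : ℂ) * fm z (n + 1) + (b n : ℂ) * fm z n
        = (z + z⁻¹) * fm z n)
    (hfmbc : ∀ z : ℂ, z ≠ 0 → ∀ n : ℤ, n ≤ Nm → fm z n = z ^ (-n)) :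
    (∀ z : ℂ, ‖z‖ = 1 → z ≠ 1 → z ≠ -1 → ∀ n : ℤ,
      z * modWron a (fp z) (fm z) n ≠ 0) ∧
    (∀ z : ℂ, z ≠ 0 → z ≠ 1 → z ≠ -1 → ∀ n : ℤ,
      ¬(z * modWron a (fp z) (fm z) n = 0 ∧ z * modWron a (fm z⁻¹) (fp z) n = 0)) := by
  have identity {z : ℂ} (hz : z ≠ 0) (n : ℤ) :=
    jost_modWron_identity (hasupp Np (.inr le_rfl)) (hasupp (Nm - 1) (.inl (by omega)))
      hfp hfpbc hfm hfmbc hz n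
  refine ⟨fun z hz₁ h₁ h₂ n hw => ?_, fun z hz h₁ h₂ n ⟨hw, hs⟩ => ?_⟩
  · have hz : z ≠ 0 := norm_ne_zero_iff.mp (by rw [hz₁]; exact one_ne_zero)
    have ha' (n : ℤ) : a n ≠ 0 := (ha n).ne'
    have hcp : fp z⁻¹ = conj ∘ fp z := Complex.inv_eq_conj hz₁ ▸
      jost_apply_conj ha' hfp (e := id) (fun w hw k hk => hfpbc w hw k hk.1) hz
    have hcm : fm z⁻¹ = conj ∘ fm z := Complex.inv_eq_conj hz₁ ▸
      jost_apply_conj ha' hfm (N := Nm - 1) (e := Neg.neg)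
        (fun w hw k hk => hfmbc w hw k (by linarith [hk.2])) hz
    have hs : modWron a (fm z) (fp z⁻¹) n = conj (modWron a (fm z⁻¹) (fp z) n) := by
      simp [modWron, hcp, hcm]
    have h := identity hz n
    rw [(mul_eq_zero.mp hw).resolve_left hz, zero_mul, zero_add, hs] at h
    exact sub_inv_ne_zero hz h₁ h₂ (sub_inv_eq_zero_of_sq_eq_mul_conj hz₁ h)
  · have h := identity hz n
    rw [(mul_eq_zero.mp hw).resolve_left hz, (mul_eq_zero.mp hs).resolve_left hz, zero_mul,
      zero_mul, zero_add] at h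
    exact sub_inv_ne_zero hz h₁ h₂ (pow_eq_zero_iff two_ne_zero |>.mp h)

/-- `w(z) = z[f⁺(z), f⁻(z)]` does not vanish on the unit circle except possibly at `±1`;
moreover `w` and `s⁻(z) = z[f⁻(z⁻¹), f⁺(z)]` cannot vanish simultaneously on
`ℂ∖{0, 1, −1}`. -/
theorem w_nonvanishing_and_no_common_zero (a b : ℤ → ℝ) (Nm Np : ℤ)
    (ha : ∀ n, 0 < a n)
    (hasupp : ∀ n, n < Nm ∨ Np ≤ n → a n = 1)
    (hbsupp : ∀ n, n < Nm ∨ Np < n → b n = 0)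
    (fp fm : ℂ → ℤ → ℂ)
    (hfp : ∀ z : ℂ, z ≠ 0 → ∀ n : ℤ,
      (a (n - 1) : ℂ) * fp z (n - 1) + (a n : ℂ) * fp z (n + 1) + (b n : ℂ) * fp z n
        = (z + z⁻¹) * fp z n)
    (hfpbc : ∀ z : ℂ, z ≠ 0 → ∀ n : ℤ, Np ≤ n → fp z n = z ^ n)
    (hfm : ∀ z : ℂ, z ≠ 0 → ∀ n : ℤ,
      (a (n - 1) : ℂ) * fm z (n - 1) + (a n : ℂ) * fm z (n + 1) + (b n : ℂ) * fm z n
        = (z + z⁻¹) * fm z n)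
    (hfmbc : ∀ z : ℂ, z ≠ 0 → ∀ n : ℤ, n ≤ Nm → fm z n = z ^ (-n)) :
    (∀ z : ℂ, ‖z‖ = 1 → z ≠ 1 → z ≠ -1 → ∀ n : ℤ,
      z * modWron a (fp z) (fm z) n ≠ 0) ∧
    (∀ z : ℂ, z ≠ 0 → z ≠ 1 → z ≠ -1 → ∀ n : ℤ,
      ¬(z * modWron a (fp z) (fm z) n = 0 ∧ z * modWron a (fm z⁻¹) (fp z) n = 0)) :=
  w_nonvanishing_and_no_common_zero_general a b Nm Np ha hasupp fp fm hfp hfpbc hfm hfmbc
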